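/- Let V : (0,∞) → ℝ be continuous with |V(r)| ≲ ⟨r⟩^{−6}, and let L_V = −∂_r² + 2/r² + V on L²(0,∞). If φ₀ is a bounded solution of L_V φ₀ = 0, then |φ₀(r)| ≲ r^{−1} as r → ∞ and |φ₀(r)| ≲ r² as r → 0; in particular φ₀ ∈ L²(0,∞), so a zero-energy resonance (bounded non-L² zero mode) is impossible for L_V. -/

import Mathlib

/-!
Let `w = W(r², φ)` and `v = W(r⁻¹, φ)` be the Wronskians of `φ` with the two free solutions.
Then `w' = r² V φ`, `v' = r⁻¹ V φ` and `3 φ = r² v - w / r`, so it suffices to estimate `w`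
and `v`. At infinity `|w'| ≲ r⁻⁴` keeps `w` bounded; then `r² v = 3 φ + w / r` is bounded, so
`v → 0` and integrating `v'` from infinity gives `v = O(r⁻⁶)`, whence `φ = O(r⁻¹)`. Near the
origin, integrating `v'` from `1` gives `v = O(r⁻¹)`, so `w = r (r² v - 3 φ) → 0`, and
integrating `w'` from `0` gives `w = O(r³)`, whence `φ = O(r)`. Fed back into `v'`, this makes
`v` bounded and `φ = O(r²)`. Square integrability follows from boundedness and the `r⁻¹` decay.
-/

open Real Set MeasureTheory Filter Topology

theorem abs_sub_le_sub_of_abs_deriv_le {F f H h : ℝ → ℝ} {a b : ℝ} (hab : a ≤ b)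
    (hF : ∀ x ∈ Icc a b, HasDerivAt F (f x) x) (hH : ∀ x ∈ Icc a b, HasDerivAt H (h x) x)
    (hfh : ∀ x ∈ Icc a b, |f x| ≤ h x) : |F b - F a| ≤ H b - H a := by
  have hF' : ∀ x ∈ Icc a b, HasDerivAt (fun y => F y - F a) (f x) x :=
    fun x hx => (hF x hx).sub_const _
  have hH' : ∀ x ∈ Icc a b, HasDerivAt (fun y => H y - H a) (h x) x :=
    fun x hx => (hH x hx).sub_const _
  exact image_norm_le_of_norm_deriv_right_le_deriv_boundary'
    (fun x hx => (hF' x hx).continuousAt.continuousWithinAt)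
    (fun x hx => (hF' x (Ico_subset_Icc_self hx)).hasDerivWithinAt) (by simp)
    (fun x hx => (hH' x hx).continuousAt.continuousWithinAt)
    (fun x hx => (hH' x (Ico_subset_Icc_self hx)).hasDerivWithinAt)
    (fun x hx => hfh x (Ico_subset_Icc_self hx)) ⟨hab, le_rfl⟩

theorem abs_sub_le_of_abs_deriv_le_mul_pow {F f : ℝ → ℝ} {A r ρ : ℝ} (n : ℕ) (hr : 0 < r)
    (hrρ : r ≤ ρ) (hF : ∀ s ∈ Icc r ρ, HasDerivAt F (f s) s)
    (hf : ∀ s ∈ Icc r ρ, |f s| ≤ A * s ^ n) : |F ρ - F r| ≤ A * ρ ^ (n + 1) / (n + 1) := by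
  have hA : 0 ≤ A := nonneg_of_mul_nonneg_left ((abs_nonneg _).trans (hf ρ ⟨hrρ, le_rfl⟩))
    (pow_pos (hr.trans_le hrρ) n)
  have hH : ∀ s ∈ Icc r ρ, HasDerivAt (fun s => A * s ^ (n + 1) / (n + 1)) (A * s ^ n) s := by
    intro s _
    refine (((hasDerivAt_pow (n + 1) s).const_mul A).div_const ((n : ℝ) + 1)).congr_deriv ?_
    push_cast
    field_simp
  calc |F ρ - F r| ≤ _ := abs_sub_le_sub_of_abs_deriv_le hrρ hF hH hf
    _ ≤ A * ρ ^ (n + 1) / (n + 1) := by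
      have : 0 ≤ A * r ^ (n + 1) / (n + 1) := by positivity
      linarith

theorem abs_sub_le_of_abs_deriv_le_div_pow {F f : ℝ → ℝ} {A r ρ : ℝ} (n : ℕ) (hr : 0 < r)
    (hrρ : r ≤ ρ) (hF : ∀ s ∈ Icc r ρ, HasDerivAt F (f s) s)
    (hf : ∀ s ∈ Icc r ρ, |f s| ≤ A / s ^ (n + 2)) :
    |F ρ - F r| ≤ A / ((n + 1) * r ^ (n + 1)) := by
  have hρ := hr.trans_le hrρ
  have hA : 0 ≤ A := by
    simpa using (le_div_iff₀ (pow_pos hρ (n + 2))).mp ((abs_nonneg _).trans (hf ρ ⟨hrρ, le_rfl⟩))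
  have hH : ∀ s ∈ Icc r ρ,
      HasDerivAt (fun s => -(A / (n + 1)) * (s ^ (n + 1))⁻¹) (A / s ^ (n + 2)) s := by
    intro s hs
    have hs0 : s ≠ 0 := (hr.trans_le hs.1).ne'
    refine (((hasDerivAt_pow (n + 1) s).inv (pow_ne_zero _ hs0)).const_mul
      (-(A / (n + 1)))).congr_deriv ?_
    push_cast
    field_simp
    ring
  calc |F ρ - F r| ≤ _ := abs_sub_le_sub_of_abs_deriv_le hrρ hF hH hf
    _ ≤ A / ((n + 1) * r ^ (n + 1)) := by
      field_simp
      nlinarith [pow_pos hr (n + 1)]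

theorem abs_le_of_tendsto_zero_of_abs_sub_le {l : Filter ℝ} [l.NeBot] {F : ℝ → ℝ} {x c : ℝ}
    (hF : Tendsto F l (𝓝 0)) (h : ∀ᶠ y in l, |F x - F y| ≤ c) : |F x| ≤ c := by
  have hlim : Tendsto (fun y => |F y| + c) l (𝓝 c) := by
    simpa using hF.abs.add_const c
  refine ge_of_tendsto hlim (h.mono fun y hy => ?_)
  linarith [abs_sub_abs_le_abs_sub (F x) (F y)]

noncomputable def wronskian (f g : ℝ → ℝ) (x : ℝ) : ℝ := f x * deriv g x - deriv f x * g x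

theorem hasDerivAt_wronskian {f g : ℝ → ℝ} {x f'' g'' : ℝ} (hf : DifferentiableAt ℝ f x)
    (hg : DifferentiableAt ℝ g x) (hf' : HasDerivAt (deriv f) f'' x)
    (hg' : HasDerivAt (deriv g) g'' x) :
    HasDerivAt (wronskian f g) (f x * g'' - f'' * g x) x :=
  ((hf.hasDerivAt.mul hg').sub (hf'.mul hg.hasDerivAt)).congr_deriv (by ring)

def SolvesZeroEnergy (V φ : ℝ → ℝ) : Prop :=
  ∀ r > 0, DifferentiableAt ℝ φ r ∧ HasDerivAt (deriv φ) ((2 / r ^ 2 + V r) * φ r) r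

theorem solvesZeroEnergy_of_contDiffOn {V φ : ℝ → ℝ} (hφ : ContDiffOn ℝ 2 φ (Ioi 0))
    (heq : ∀ r ∈ Ioi (0 : ℝ), -(deriv (deriv φ) r) + (2 / r ^ 2) * φ r + V r * φ r = 0) :
    SolvesZeroEnergy V φ := by
  intro r hr
  have hφ' : ContDiffOn ℝ 1 (deriv φ) (Ioi 0) := hφ.deriv_of_isOpen isOpen_Ioi (by norm_num)
  refine ⟨(hφ.differentiableOn (by norm_num)).differentiableAt (Ioi_mem_nhds hr), ?_⟩
  have hd := ((hφ'.differentiableOn one_ne_zero).differentiableAt (Ioi_mem_nhds hr)).hasDerivAt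
  exact hd.congr_deriv (by linarith [heq r hr])

namespace SolvesZeroEnergy

variable {V φ : ℝ → ℝ}

theorem continuousOn (hφ : SolvesZeroEnergy V φ) : ContinuousOn φ (Ioi 0) :=
  fun r hr => (hφ r hr).1.continuousAt.continuousWithinAt

theorem hasDerivAt_wronskian (hφ : SolvesZeroEnergy V φ) {f : ℝ → ℝ} {r : ℝ} (hr : 0 < r)
    (hf : DifferentiableAt ℝ f r) (hf' : HasDerivAt (deriv f) (2 / r ^ 2 * f r) r) :
    HasDerivAt (wronskian f φ) (f r * (V r * φ r)) r :=
  (_root_.hasDerivAt_wronskian hf (hφ r hr).1 hf' (hφ r hr).2).congr_deriv (by ring)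

theorem hasDerivAt_wronskian_sq (hφ : SolvesZeroEnergy V φ) {r : ℝ} (hr : 0 < r) :
    HasDerivAt (wronskian (· ^ 2) φ) (r ^ 2 * (V r * φ r)) r := by
  refine hφ.hasDerivAt_wronskian hr (by fun_prop) ?_
  have hderiv : deriv (fun x : ℝ => x ^ 2) = fun x => 2 * x := by ext; simp
  rw [hderiv]
  exact ((hasDerivAt_id r).const_mul 2).congr_deriv (by field_simp)

theorem hasDerivAt_wronskian_inv (hφ : SolvesZeroEnergy V φ) {r : ℝ} (hr : 0 < r) :
    HasDerivAt (wronskian (·⁻¹) φ) (r⁻¹ * (V r * φ r)) r := by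
  refine hφ.hasDerivAt_wronskian hr (differentiableAt_inv hr.ne') ?_
  rw [deriv_inv']
  exact ((hasDerivAt_pow 2 r).inv (pow_ne_zero 2 hr.ne')).neg.congr_deriv (by field_simp; ring)

end SolvesZeroEnergy

theorem three_mul_eq_wronskian (φ : ℝ → ℝ) {r : ℝ} (hr : r ≠ 0) :
    3 * φ r = r ^ 2 * wronskian (·⁻¹) φ r - r⁻¹ * wronskian (· ^ 2) φ r := by
  simp only [wronskian, deriv_inv', deriv_pow_field]
  field_simp
  ring

theorem abs_triangle_wronskian (φ : ℝ → ℝ) {r : ℝ} (hr : 0 < r) :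
    3 * |φ r| ≤ r ^ 2 * |wronskian (·⁻¹) φ r| + |wronskian (· ^ 2) φ r| / r ∧
    r ^ 2 * |wronskian (·⁻¹) φ r| ≤ 3 * |φ r| + |wronskian (· ^ 2) φ r| / r ∧
    |wronskian (· ^ 2) φ r| / r ≤ 3 * |φ r| + r ^ 2 * |wronskian (·⁻¹) φ r| := by
  have h := three_mul_eq_wronskian φ hr.ne'
  set a := 3 * φ r
  set b := r ^ 2 * wronskian (·⁻¹) φ r
  set c := r⁻¹ * wronskian (· ^ 2) φ r
  have ha : |a| = 3 * |φ r| := by simp [a, abs_mul]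
  have hb : |b| = r ^ 2 * |wronskian (·⁻¹) φ r| := by simp [b, abs_mul]
  have hc : |c| = |wronskian (· ^ 2) φ r| / r := by
    simp [c, abs_div, abs_of_pos hr, inv_mul_eq_div]
  rw [← ha, ← hb, ← hc, h]
  refine ⟨abs_sub _ _, ?_, ?_⟩
  · simpa using abs_add_le (b - c) c
  · simpa [abs_sub_comm] using abs_sub (b - c) b

theorem abs_mul_le_of_abs_le_div_one_add_pow {x y C M r : ℝ} (n : ℕ) (hr : 0 < r)
    (hx : |x| ≤ C / (1 + r) ^ n) (hy : |y| ≤ M) : |x * y| ≤ C * M := by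
  have hC : 0 ≤ C := by
    simpa using (le_div_iff₀ (by positivity)).mp ((abs_nonneg x).trans hx)
  rw [abs_mul]
  exact mul_le_mul (hx.trans (div_le_self hC (one_le_pow₀ (by linarith)))) hy (abs_nonneg y) hC

theorem abs_mul_le_div_pow_of_abs_le_div_one_add_pow {x y C M r : ℝ} (n : ℕ) (hr : 0 < r)
    (hx : |x| ≤ C / (1 + r) ^ n) (hy : |y| ≤ M) : |x * y| ≤ C * M / r ^ n := by
  have hCM : 0 ≤ C * M := (abs_nonneg _).trans (abs_mul_le_of_abs_le_div_one_add_pow n hr hx hy)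
  rw [abs_mul]
  calc |x| * |y| ≤ C / (1 + r) ^ n * M := mul_le_mul hx hy (abs_nonneg y) ((abs_nonneg x).trans hx)
    _ = C * M / (1 + r) ^ n := by ring
    _ ≤ C * M / r ^ n := div_le_div_of_nonneg_left hCM (by positivity)
          (pow_le_pow_left₀ hr.le (by linarith) n)

namespace SolvesZeroEnergy

variable {V φ : ℝ → ℝ} {C₀ M : ℝ}

theorem abs_wronskian_sq_le_of_one_le (hφ : SolvesZeroEnergy V φ)
    (hV : ∀ r > 0, |V r| ≤ C₀ / (1 + r) ^ 6) (hbdd : ∀ r > 0, |φ r| ≤ M) {r : ℝ} (hr : 1 ≤ r) :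
    |wronskian (· ^ 2) φ r| ≤ |wronskian (· ^ 2) φ 1| + C₀ * M / 3 := by
  have h := abs_sub_le_of_abs_deriv_le_div_pow 2 one_pos hr
    (fun s hs => hφ.hasDerivAt_wronskian_sq (one_pos.trans_le hs.1)) fun s hs => by
      have hs0 : 0 < s := one_pos.trans_le hs.1
      calc |s ^ 2 * (V s * φ s)| ≤ s ^ 2 * (C₀ * M / s ^ 6) := by
            rw [abs_mul, abs_of_pos (by positivity)]
            gcongr
            exact abs_mul_le_div_pow_of_abs_le_div_one_add_pow 6 hs0 (hV s hs0) (hbdd s hs0)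
        _ = C₀ * M / s ^ (2 + 2) := by field_simp; ring
  norm_num at h
  linarith [abs_sub_abs_le_abs_sub (wronskian (· ^ 2) φ r) (wronskian (· ^ 2) φ 1)]

theorem tendsto_wronskian_inv_atTop (hφ : SolvesZeroEnergy V φ)
    (hV : ∀ r > 0, |V r| ≤ C₀ / (1 + r) ^ 6) (hbdd : ∀ r > 0, |φ r| ≤ M) :
    Tendsto (wronskian (·⁻¹) φ) atTop (𝓝 0) := by
  set W := |wronskian (· ^ 2) φ 1| + C₀ * M / 3
  have hbound : ∀ r ≥ (1 : ℝ), |wronskian (·⁻¹) φ r| ≤ (3 * M + W) / r ^ 2 := by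
    intro r hr
    have hr0 : 0 < r := one_pos.trans_le hr
    have hv := (abs_triangle_wronskian φ hr0).2.1
    have hw : |wronskian (· ^ 2) φ r| / r ≤ W :=
      (div_le_self (abs_nonneg _) hr).trans (hφ.abs_wronskian_sq_le_of_one_le hV hbdd hr)
    rw [le_div_iff₀ (by positivity)]
    linarith [hbdd r hr0]
  refine squeeze_zero_norm' (eventually_ge_atTop 1 |>.mono hbound) ?_
  exact tendsto_const_nhds.div_atTop (tendsto_pow_atTop two_ne_zero)

theorem abs_wronskian_inv_le_of_one_le (hφ : SolvesZeroEnergy V φ)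
    (hV : ∀ r > 0, |V r| ≤ C₀ / (1 + r) ^ 6) (hbdd : ∀ r > 0, |φ r| ≤ M) {r : ℝ} (hr : 1 ≤ r) :
    |wronskian (·⁻¹) φ r| ≤ C₀ * M / (6 * r ^ 6) := by
  have hr0 : 0 < r := one_pos.trans_le hr
  refine abs_le_of_tendsto_zero_of_abs_sub_le (hφ.tendsto_wronskian_inv_atTop hV hbdd) ?_
  filter_upwards [eventually_ge_atTop r] with ρ hρ
  rw [abs_sub_comm]
  have h := abs_sub_le_of_abs_deriv_le_div_pow 5 hr0 hρ
    (fun s hs => hφ.hasDerivAt_wronskian_inv (hr0.trans_le hs.1)) fun s hs => by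
      have hs0 : 0 < s := hr0.trans_le hs.1
      calc |s⁻¹ * (V s * φ s)| ≤ s⁻¹ * (C₀ * M / s ^ 6) := by
            rw [abs_mul, abs_of_pos (by positivity)]
            gcongr
            exact abs_mul_le_div_pow_of_abs_le_div_one_add_pow 6 hs0 (hV s hs0) (hbdd s hs0)
        _ = C₀ * M / s ^ (5 + 2) := by field_simp; ring
  norm_num at h
  exact h

theorem exists_abs_le_div_of_one_le (hφ : SolvesZeroEnergy V φ)
    (hV : ∀ r > 0, |V r| ≤ C₀ / (1 + r) ^ 6) (hbdd : ∀ r > 0, |φ r| ≤ M) :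
    ∃ C, ∀ r ≥ 1, |φ r| ≤ C / r := by
  refine ⟨(C₀ * M / 6 + |wronskian (· ^ 2) φ 1| + C₀ * M / 3) / 3, fun r hr => ?_⟩
  have hr0 : 0 < r := one_pos.trans_le hr
  have hCM : 0 ≤ C₀ * M :=
    (abs_nonneg _).trans
      (abs_mul_le_of_abs_le_div_one_add_pow 6 one_pos (hV 1 one_pos) (hbdd 1 one_pos))
  have hv : r ^ 2 * |wronskian (·⁻¹) φ r| ≤ C₀ * M / 6 / r := by
    calc r ^ 2 * |wronskian (·⁻¹) φ r| ≤ r ^ 2 * (C₀ * M / (6 * r ^ 6)) := by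
          gcongr; exact hφ.abs_wronskian_inv_le_of_one_le hV hbdd hr
      _ = C₀ * M / 6 / r / r ^ 3 := by field_simp
      _ ≤ C₀ * M / 6 / r := div_le_self (by positivity) (one_le_pow₀ hr)
  have hw : |wronskian (· ^ 2) φ r| ≤ |wronskian (· ^ 2) φ 1| + C₀ * M / 3 :=
    hφ.abs_wronskian_sq_le_of_one_le hV hbdd hr
  calc |φ r| ≤ (r ^ 2 * |wronskian (·⁻¹) φ r| + |wronskian (· ^ 2) φ r| / r) / 3 := by
        linarith [(abs_triangle_wronskian φ hr0).1]
    _ ≤ (C₀ * M / 6 / r + (|wronskian (· ^ 2) φ 1| + C₀ * M / 3) / r) / 3 := by gcongr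
    _ = _ := by ring

theorem abs_wronskian_inv_le_of_le_one (hφ : SolvesZeroEnergy V φ)
    (hV : ∀ r > 0, |V r| ≤ C₀ / (1 + r) ^ 6) (hbdd : ∀ r > 0, |φ r| ≤ M) {r : ℝ}
    (hr : r ∈ Ioc 0 1) : |wronskian (·⁻¹) φ r| ≤ |wronskian (·⁻¹) φ 1| + C₀ * M / r := by
  have h := abs_sub_le_of_abs_deriv_le_div_pow 0 hr.1 hr.2
    (fun s hs => hφ.hasDerivAt_wronskian_inv (hr.1.trans_le hs.1)) fun s hs => by
      have hs0 : 0 < s := hr.1.trans_le hs.1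
      have hCM := abs_mul_le_of_abs_le_div_one_add_pow 6 hs0 (hV s hs0) (hbdd s hs0)
      calc |s⁻¹ * (V s * φ s)| ≤ s⁻¹ * (C₀ * M) := by
            rw [abs_mul, abs_of_pos (by positivity)]
            gcongr
        _ = C₀ * M / s := inv_mul_eq_div _ _
        _ ≤ C₀ * M / s ^ (0 + 2) := div_le_div_of_nonneg_left ((abs_nonneg _).trans hCM)
            (by positivity) (by norm_num; nlinarith [hs.2])
  norm_num at h
  linarith [abs_sub_abs_le_abs_sub (wronskian (·⁻¹) φ r) (wronskian (·⁻¹) φ 1),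
    abs_sub_comm (wronskian (·⁻¹) φ r) (wronskian (·⁻¹) φ 1)]

theorem sq_mul_abs_wronskian_inv_le_of_le_one (hφ : SolvesZeroEnergy V φ)
    (hV : ∀ r > 0, |V r| ≤ C₀ / (1 + r) ^ 6) (hbdd : ∀ r > 0, |φ r| ≤ M) {r : ℝ}
    (hr : r ∈ Ioc 0 1) :
    r ^ 2 * |wronskian (·⁻¹) φ r| ≤ (|wronskian (·⁻¹) φ 1| + C₀ * M) * r := by
  have hr0 : 0 ≤ r := hr.1.le
  calc r ^ 2 * |wronskian (·⁻¹) φ r| ≤ r ^ 2 * (|wronskian (·⁻¹) φ 1| + C₀ * M / r) := by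
        gcongr; exact hφ.abs_wronskian_inv_le_of_le_one hV hbdd hr
    _ = (r * |wronskian (·⁻¹) φ 1| + C₀ * M) * r := by field_simp [hr.1.ne']
    _ ≤ (1 * |wronskian (·⁻¹) φ 1| + C₀ * M) * r := by gcongr; exact hr.2
    _ = _ := by ring

theorem tendsto_wronskian_sq_nhdsGT_zero (hφ : SolvesZeroEnergy V φ)
    (hV : ∀ r > 0, |V r| ≤ C₀ / (1 + r) ^ 6) (hbdd : ∀ r > 0, |φ r| ≤ M) :
    Tendsto (wronskian (· ^ 2) φ) (𝓝[>] 0) (𝓝 0) := by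
  set K := 3 * M + |wronskian (·⁻¹) φ 1| + C₀ * M
  have hbound : ∀ r ∈ Ioc (0 : ℝ) 1, |wronskian (· ^ 2) φ r| ≤ K * r := by
    intro r hr
    have hsq := hφ.sq_mul_abs_wronskian_inv_le_of_le_one hV hbdd hr
    have hCM : 0 ≤ |wronskian (·⁻¹) φ 1| + C₀ * M :=
      nonneg_of_mul_nonneg_left ((mul_nonneg (sq_nonneg r) (abs_nonneg _)).trans hsq) hr.1
    have hsq' : r ^ 2 * |wronskian (·⁻¹) φ r| ≤ |wronskian (·⁻¹) φ 1| + C₀ * M :=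
      hsq.trans (mul_le_of_le_one_right hCM hr.2)
    have hw := (abs_triangle_wronskian φ hr.1).2.2
    rw [div_le_iff₀ hr.1] at hw
    refine hw.trans (mul_le_mul_of_nonneg_right ?_ hr.1.le)
    linarith [hbdd r hr.1]
  have hlim : Tendsto (fun r => K * r) (𝓝[>] 0) (𝓝 0) :=
    ((continuous_const_mul K).tendsto' 0 0 (mul_zero K)).mono_left nhdsWithin_le_nhds
  refine squeeze_zero_norm' ?_ hlim
  filter_upwards [Ioc_mem_nhdsGT one_pos] with r hr using hbound r hr

theorem abs_wronskian_sq_le_of_le_one (hφ : SolvesZeroEnergy V φ)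
    (hV : ∀ r > 0, |V r| ≤ C₀ / (1 + r) ^ 6) (hbdd : ∀ r > 0, |φ r| ≤ M) {r : ℝ}
    (hr : r ∈ Ioc 0 1) : |wronskian (· ^ 2) φ r| ≤ C₀ * M * r ^ 3 / 3 := by
  refine abs_le_of_tendsto_zero_of_abs_sub_le (hφ.tendsto_wronskian_sq_nhdsGT_zero hV hbdd) ?_
  filter_upwards [Ioo_mem_nhdsGT hr.1] with ρ hρ
  have h := abs_sub_le_of_abs_deriv_le_mul_pow 2 hρ.1 hρ.2.le
    (fun s hs => hφ.hasDerivAt_wronskian_sq (hρ.1.trans_le hs.1)) fun s hs => by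
      have hs0 : 0 < s := hρ.1.trans_le hs.1
      rw [abs_mul, abs_of_pos (by positivity), mul_comm]
      gcongr
      exact abs_mul_le_of_abs_le_div_one_add_pow 6 hs0 (hV s hs0) (hbdd s hs0)
  norm_num at h
  exact h

theorem exists_abs_le_mul_of_le_one (hφ : SolvesZeroEnergy V φ)
    (hV : ∀ r > 0, |V r| ≤ C₀ / (1 + r) ^ 6) (hbdd : ∀ r > 0, |φ r| ≤ M) :
    ∃ K, ∀ r ∈ Ioc (0 : ℝ) 1, |φ r| ≤ K * r := by
  refine ⟨(|wronskian (·⁻¹) φ 1| + C₀ * M + C₀ * M / 3) / 3, fun r hr => ?_⟩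
  have hr0 : 0 ≤ r := hr.1.le
  have hCM : 0 ≤ C₀ * M := (abs_nonneg _).trans
    (abs_mul_le_of_abs_le_div_one_add_pow 6 hr.1 (hV r hr.1) (hbdd r hr.1))
  have hv := hφ.sq_mul_abs_wronskian_inv_le_of_le_one hV hbdd hr
  have hw : |wronskian (· ^ 2) φ r| / r ≤ C₀ * M / 3 * r := by
    calc |wronskian (· ^ 2) φ r| / r ≤ C₀ * M * r ^ 3 / 3 / r := by
          gcongr; exact hφ.abs_wronskian_sq_le_of_le_one hV hbdd hr
      _ = C₀ * M / 3 * r * r := by field_simp [hr.1.ne']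
      _ ≤ C₀ * M / 3 * r * 1 := by gcongr; exact hr.2
      _ = _ := mul_one _
  linarith [(abs_triangle_wronskian φ hr.1).1]

theorem exists_abs_le_mul_sq_of_le_one (hφ : SolvesZeroEnergy V φ)
    (hV : ∀ r > 0, |V r| ≤ C₀ / (1 + r) ^ 6) (hbdd : ∀ r > 0, |φ r| ≤ M) :
    ∃ C, ∀ r ∈ Ioc (0 : ℝ) 1, |φ r| ≤ C * r ^ 2 := by
  obtain ⟨K, hK⟩ := hφ.exists_abs_le_mul_of_le_one hV hbdd
  refine ⟨(|wronskian (·⁻¹) φ 1| + C₀ * K + C₀ * M / 3) / 3, fun r hr => ?_⟩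
  have hr0 : 0 ≤ r := hr.1.le
  have h := abs_sub_le_of_abs_deriv_le_mul_pow 0 hr.1 hr.2
    (fun s hs => hφ.hasDerivAt_wronskian_inv (hr.1.trans_le hs.1)) fun s hs => by
      have hs0 : 0 < s := hr.1.trans_le hs.1
      calc |s⁻¹ * (V s * φ s)| ≤ s⁻¹ * (C₀ * (K * s)) := by
            rw [abs_mul, abs_of_pos (by positivity)]
            gcongr
            exact abs_mul_le_of_abs_le_div_one_add_pow 6 hs0 (hV s hs0) (hK s ⟨hs0, hs.2⟩)
        _ = C₀ * K * s ^ 0 := by field_simp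
  norm_num at h
  have hv : |wronskian (·⁻¹) φ r| ≤ |wronskian (·⁻¹) φ 1| + C₀ * K := by
    linarith [abs_sub_abs_le_abs_sub (wronskian (·⁻¹) φ r) (wronskian (·⁻¹) φ 1),
      abs_sub_comm (wronskian (·⁻¹) φ r) (wronskian (·⁻¹) φ 1)]
  have hw : |wronskian (· ^ 2) φ r| / r ≤ C₀ * M / 3 * r ^ 2 := by
    calc |wronskian (· ^ 2) φ r| / r ≤ C₀ * M * r ^ 3 / 3 / r := by
          gcongr; exact hφ.abs_wronskian_sq_le_of_le_one hV hbdd hr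
      _ = _ := by field_simp [hr.1.ne']
  have hv' : r ^ 2 * |wronskian (·⁻¹) φ r| ≤ r ^ 2 * (|wronskian (·⁻¹) φ 1| + C₀ * K) := by
    gcongr
  linarith [(abs_triangle_wronskian φ hr.1).1]

end SolvesZeroEnergy

theorem integrableOn_sq_Ioi_zero_of_abs_le {φ : ℝ → ℝ} {M C : ℝ} (hc : ContinuousOn φ (Ioi 0))
    (hbdd : ∀ r > 0, |φ r| ≤ M) (hdecay : ∀ r ≥ 1, |φ r| ≤ C / r) :
    IntegrableOn (fun r => φ r ^ 2) (Ioi 0) := by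
  have hc2 : ContinuousOn (fun r => φ r ^ 2) (Ioi 0) := hc.pow 2
  rw [← Ioc_union_Ioi_eq_Ioi zero_le_one]
  refine IntegrableOn.union ?_ ?_
  · refine Integrable.mono' (integrableOn_const measure_Ioc_lt_top.ne (C := M ^ 2))
      ((hc2.mono Ioc_subset_Ioi_self).aestronglyMeasurable measurableSet_Ioc) ?_
    filter_upwards [ae_restrict_mem measurableSet_Ioc] with r hr
    rw [norm_pow, Real.norm_eq_abs]
    exact pow_le_pow_left₀ (abs_nonneg _) (hbdd r hr.1) 2
  · refine Integrable.mono' ((integrableOn_Ioi_rpow_of_lt (by norm_num : (-2 : ℝ) < -1)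
      one_pos).const_mul (C ^ 2))
      ((hc2.mono (Ioi_subset_Ioi zero_le_one)).aestronglyMeasurable measurableSet_Ioi) ?_
    filter_upwards [ae_restrict_mem measurableSet_Ioi] with r (hr : 1 < r)
    have hr0 : 0 < r := one_pos.trans hr
    rw [norm_pow, Real.norm_eq_abs, Real.rpow_neg hr0.le, Real.rpow_two, ← div_eq_mul_inv,
      ← div_pow]
    exact pow_le_pow_left₀ (abs_nonneg _) (hdecay r hr.le) 2

theorem stmt13 (V φ : ℝ → ℝ) (C₀ M : ℝ)
    (hV : ∀ r > (0:ℝ), |V r| ≤ C₀ / (1 + r)^6)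
    (hsmooth : ContDiffOn ℝ 2 φ (Set.Ioi 0))
    (heq : ∀ r ∈ Set.Ioi (0:ℝ),
      -(deriv (deriv φ) r) + (2/r^2) * φ r + V r * φ r = 0)
    (hbdd : ∀ r > (0:ℝ), |φ r| ≤ M) :
    (∃ C₁ R : ℝ, 0 < R ∧ ∀ r ≥ R, |φ r| ≤ C₁ / r) ∧
    (∃ C₂ ε : ℝ, 0 < ε ∧ ∀ r ∈ Set.Ioo (0:ℝ) ε, |φ r| ≤ C₂ * r^2) ∧
    IntegrableOn (fun r : ℝ => (φ r)^2) (Set.Ioi 0) := by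
  have hφ : SolvesZeroEnergy V φ := solvesZeroEnergy_of_contDiffOn hsmooth heq
  obtain ⟨C₁, hinf⟩ := hφ.exists_abs_le_div_of_one_le hV hbdd
  obtain ⟨C₂, hzero⟩ := hφ.exists_abs_le_mul_sq_of_le_one hV hbdd
  exact ⟨⟨C₁, 1, one_pos, hinf⟩, ⟨C₂, 1, one_pos, fun r hr => hzero r (Ioo_subset_Ioc_self hr)⟩,
    integrableOn_sq_Ioi_zero_of_abs_le hφ.continuousOn hbdd hinf⟩
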